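/- arXiv:2304.04612 — 3 statements merged into one kernel-verified Lean document; each statement's English description precedes it below -/
import Mathlib

section
/- Let n1, n2, n3, n4 be positive natural numbers and let α > 0. Let S be a fixed real n1×n2 matrix and T a fixed real n3×n4 matrix, and let G be a random n2×n3 real matrix whose entries are independent Gaussian random variables with mean 0 and variance α. Then the expectation of the squared Frobenius norm of S·G·T equals α times the product of the squared Frobenius norms of S and T: E‖S·G·T‖_F² = α·‖S‖_F²·‖T‖_F². -/
open MeasureTheory ProbabilityTheory
open scoped NNReal

open Real Filter
open scoped ENNReal

-- second moment of the centered Gaussian density kernel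
lemma integral_sq_exp_neg_mul_sq {b : ℝ} (hb : 0 < b) :
    ∫ x : ℝ, x ^ 2 * rexp (-b * x ^ 2) = Real.sqrt (π / b) / (2 * b) := by
  have hsq : Integrable (fun x : ℝ => x ^ 2 * rexp (-b * x ^ 2)) := by
    have h := integrable_rpow_mul_exp_neg_mul_sq hb (s := 2) (by norm_num)
    have : ∀ x : ℝ, x ^ (2 : ℝ) = x ^ (2 : ℕ) := by
      intro x
      rw [show ((2:ℝ)) = ((2:ℕ):ℝ) by norm_num, Real.rpow_natCast]
    simpa [this] using h
  have hderiv : ∀ x : ℝ, HasDerivAt (fun x : ℝ => x * rexp (-b * x ^ 2))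
      (rexp (-b * x ^ 2) + (-(2*b)) * (x ^ 2 * rexp (-b * x ^ 2))) x := by
    intro x
    have h1 : HasDerivAt (fun x : ℝ => -b * x ^ 2) (-b * (2 * x)) x := by
      simpa using (hasDerivAt_pow 2 x).const_mul (-b)
    have h := (hasDerivAt_id x).mul h1.exp
    refine h.congr_deriv ?_
    simp
    ring
  have htop0 : Tendsto (fun x : ℝ => x ^ (1:ℝ) * rexp (-b * x ^ 2)) atTop (nhds 0) := by
    have h := rpow_mul_exp_neg_mul_sq_isLittleO_exp_neg hb (1:ℝ)
    have hlin : Tendsto (fun x : ℝ => -(1/2 : ℝ) * x) atTop atBot :=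
      (tendsto_const_mul_atBot_of_neg (by norm_num)).mpr tendsto_id
    exact h.trans_tendsto (tendsto_exp_atBot.comp hlin)
  have htop : Tendsto (fun x : ℝ => x * rexp (-b * x ^ 2)) atTop (nhds 0) := by
    simpa [Real.rpow_one] using htop0
  have hbot : Tendsto (fun x : ℝ => x * rexp (-b * x ^ 2)) atBot (nhds 0) := by
    have htop' : Tendsto (fun x : ℝ => -(x * rexp (-b * x ^ 2))) atTop (nhds 0) := by
      simpa using htop.neg
    have h := htop'.comp tendsto_neg_atBot_atTop
    refine h.congr fun x => ?_
    simp [Function.comp, neg_mul, neg_sq]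
  have hint : Integrable (fun x : ℝ =>
      rexp (-b * x ^ 2) + (-(2*b)) * (x ^ 2 * rexp (-b * x ^ 2))) :=
    (integrable_exp_neg_mul_sq hb).add (hsq.const_mul _)
  have key := integral_of_hasDerivAt_of_tendsto hderiv hint hbot htop
  rw [integral_add (integrable_exp_neg_mul_sq hb) (hsq.const_mul _),
    integral_const_mul, integral_gaussian] at key
  have h2b : (2*b) ≠ 0 := by positivity
  field_simp at key ⊢
  linarith

section GaussianMoments

variable {α : ℝ≥0}

lemma gaussianPDFReal_eq (α : ℝ≥0) (x : ℝ) :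
    gaussianPDFReal 0 α x
      = (Real.sqrt (2 * π * α))⁻¹ * rexp (-(2 * (α:ℝ))⁻¹ * x ^ 2) := by
  rw [gaussianPDFReal, sub_zero]
  congr 1
  rw [Real.exp_eq_exp]
  ring

lemma integral_gaussianReal_eq (hα : α ≠ 0) (g : ℝ → ℝ) :
    ∫ x, g x ∂(gaussianReal 0 α) = ∫ x, gaussianPDFReal 0 α x * g x := by
  rw [gaussianReal_of_var_ne_zero _ hα, gaussianPDF_def]
  have hm : Measurable fun x => (gaussianPDFReal 0 α x).toNNReal :=
    (measurable_gaussianPDFReal 0 α).real_toNNReal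
  rw [show (fun x => ENNReal.ofReal (gaussianPDFReal 0 α x))
      = fun x => ((gaussianPDFReal 0 α x).toNNReal : ℝ≥0∞) from rfl,
    integral_withDensity_eq_integral_smul hm g]
  congr 1
  ext x
  simp [NNReal.smul_def, Real.coe_toNNReal _ (gaussianPDFReal_nonneg 0 α x)]

lemma integrable_gaussianReal_iff (hα : α ≠ 0) (g : ℝ → ℝ) :
    Integrable g (gaussianReal 0 α)
      ↔ Integrable (fun x => gaussianPDFReal 0 α x * g x) := by
  rw [gaussianReal_of_var_ne_zero _ hα, gaussianPDF_def]
  have hm : Measurable fun x => (gaussianPDFReal 0 α x).toNNReal :=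
    (measurable_gaussianPDFReal 0 α).real_toNNReal
  rw [show (fun x => ENNReal.ofReal (gaussianPDFReal 0 α x))
      = fun x => ((gaussianPDFReal 0 α x).toNNReal : ℝ≥0∞) from rfl,
    integrable_withDensity_iff_integrable_smul hm]
  constructor <;> intro h <;> refine h.congr (Filter.Eventually.of_forall fun x => ?_) <;>
    simp [NNReal.smul_def, Real.coe_toNNReal _ (gaussianPDFReal_nonneg 0 α x)]

lemma gaussian_b_pos (hα : α ≠ 0) : 0 < (2 * (α:ℝ))⁻¹ := by
  have h1 : (0:ℝ≥0) < α := zero_lt_iff.mpr hα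
  have : 0 < (α:ℝ) := by exact_mod_cast h1
  positivity

lemma integrable_id_gaussianReal (hα : α ≠ 0) :
    Integrable (fun x : ℝ => x) (gaussianReal 0 α) := by
  rw [integrable_gaussianReal_iff hα]
  have hb : 0 < (2 * (α:ℝ))⁻¹ := gaussian_b_pos hα
  have := (integrable_mul_exp_neg_mul_sq hb).const_mul (Real.sqrt (2 * π * α))⁻¹
  refine this.congr (Filter.Eventually.of_forall fun x => ?_)
  simp only [gaussianPDFReal_eq]
  ring

lemma integrable_sq_gaussianReal (hα : α ≠ 0) :
    Integrable (fun x : ℝ => x * x) (gaussianReal 0 α) := by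
  rw [integrable_gaussianReal_iff hα]
  have hb : 0 < (2 * (α:ℝ))⁻¹ := gaussian_b_pos hα
  have hsq : Integrable (fun x : ℝ => x ^ 2 * rexp (-(2 * (α:ℝ))⁻¹ * x ^ 2)) := by
    have h := integrable_rpow_mul_exp_neg_mul_sq hb (s := 2) (by norm_num)
    have h2 : ∀ x : ℝ, x ^ (2 : ℝ) = x ^ (2 : ℕ) := by
      intro x
      rw [show ((2:ℝ)) = ((2:ℕ):ℝ) by norm_num, Real.rpow_natCast]
    simpa [h2] using h
  have := hsq.const_mul (Real.sqrt (2 * π * α))⁻¹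
  refine this.congr (Filter.Eventually.of_forall fun x => ?_)
  simp only [gaussianPDFReal_eq]
  ring

lemma integral_id_gaussianReal' (hα : α ≠ 0) :
    ∫ x, x ∂(gaussianReal 0 α) = 0 := by
  have hmap := gaussianReal_map_const_mul (μ := 0) (v := α) (-1)
  have hv : (⟨(-1:ℝ)^2, sq_nonneg _⟩ : ℝ≥0) = 1 := by
    ext; norm_num
  replace hmap : Measure.map (fun x : ℝ => -1 * x) (gaussianReal 0 α) = gaussianReal 0 α :=
    hmap.trans (by rw [mul_zero]; congr 1; ext; simp)
  have hint := integral_map (μ := gaussianReal 0 α)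
    (φ := fun x : ℝ => (-1) * x) ((measurable_id.const_mul (-1)).aemeasurable)
    (f := fun x : ℝ => x) aestronglyMeasurable_id
  rw [hmap] at hint
  simp only [neg_one_mul] at hint
  rw [integral_neg] at hint
  linarith [hint]

lemma integral_sq_gaussianReal (hα : α ≠ 0) :
    ∫ x, x * x ∂(gaussianReal 0 α) = (α : ℝ) := by
  have hb : 0 < (2 * (α:ℝ))⁻¹ := gaussian_b_pos hα
  have hα' : 0 < (α:ℝ) := by
    have h1 : (0:ℝ≥0) < α := zero_lt_iff.mpr hα
    exact_mod_cast h1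
  rw [integral_gaussianReal_eq hα]
  have : (fun x : ℝ => gaussianPDFReal 0 α x * (x * x))
      = fun x : ℝ => (Real.sqrt (2 * π * α))⁻¹ * (x ^ 2 * rexp (-(2 * (α:ℝ))⁻¹ * x ^ 2)) := by
    funext x
    rw [gaussianPDFReal_eq]
    ring
  rw [this, integral_const_mul, integral_sq_exp_neg_mul_sq hb]
  rw [show π / (2 * (α:ℝ))⁻¹ = 2 * π * α by field_simp]
  have hs : 0 < Real.sqrt (2 * π * α) := Real.sqrt_pos.mpr (by positivity)
  field_simp

end GaussianMoments

section PiLemmas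

variable {ι : Type*} [Fintype ι] [DecidableEq ι] {E : Type*} [MeasurableSpace E]
  (μ : Measure E) [IsProbabilityMeasure μ]

lemma two_coord_rep (u v : E → ℝ) (a b : ι) (x : ι → E) :
    u (x a) * v (x b)
      = ∏ i, ((if i = a then u (x i) else 1) * (if i = b then v (x i) else 1)) := by
  rw [Finset.prod_mul_distrib]
  simp [Finset.prod_ite_eq']

lemma integrable_two_coord {u v : E → ℝ} (hu : Integrable u μ) (hv : Integrable v μ)
    (huv : Integrable (fun t => u t * v t) μ) (a b : ι) :
    Integrable (fun x : ι → E => u (x a) * v (x b)) (Measure.pi fun _ => μ) := by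
  letI : MeasureSpace E := ⟨μ⟩
  have h : Integrable (fun x : ι → E =>
      ∏ i, ((if i = a then u (x i) else 1) * (if i = b then v (x i) else 1))) := by
    refine Integrable.fintype_prod (𝕜 := ℝ)
      (f := fun i t => (if i = a then u t else 1) * (if i = b then v t else 1)) fun i => ?_
    by_cases h1 : i = a <;> by_cases h2 : i = b
    · have hab : a = b := h1.symm.trans h2
      simp only [h1, hab, if_pos rfl]
      exact huv
    · have hab : ¬ a = b := fun h => h2 (h1.trans h)
      simp only [h1, if_pos rfl, if_neg hab, mul_one]
      exact hu
    · have hab : ¬ b = a := fun h => h1 (h2.trans h)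
      simp only [h2, if_pos rfl, if_neg hab, one_mul]
      exact hv
    · simp [h1, h2, integrable_const]
  have h' := h.congr (Filter.Eventually.of_forall fun x => (two_coord_rep u v a b x).symm)
  exact h'

lemma integral_two_coord {u v : E → ℝ} (hu : Integrable u μ) (hv : Integrable v μ)
    (huv : Integrable (fun t => u t * v t) μ) (a b : ι) :
    ∫ x : ι → E, u (x a) * v (x b) ∂(Measure.pi fun _ => μ)
      = if a = b then ∫ t, u t * v t ∂μ else (∫ t, u t ∂μ) * ∫ t, v t ∂μ := by
  letI : MeasureSpace E := ⟨μ⟩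
  have hrep : (fun x : ι → E => u (x a) * v (x b))
      = fun x => ∏ i, ((if i = a then u (x i) else 1) * (if i = b then v (x i) else 1)) :=
    funext (two_coord_rep u v a b)
  calc ∫ x : ι → E, u (x a) * v (x b) ∂(Measure.pi fun _ => μ)
      = ∏ i, ∫ t, (if i = a then u t else 1) * (if i = b then v t else 1) ∂μ := by
        rw [hrep]
        exact integral_fintype_prod_eq_prod (𝕜 := ℝ)
          (fun i t => (if i = a then u t else 1) * (if i = b then v t else 1))
    _ = if a = b then ∫ t, u t * v t ∂μ else (∫ t, u t ∂μ) * ∫ t, v t ∂μ := by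
        by_cases hab : a = b
        · subst hab
          rw [if_pos rfl]
          rw [Finset.prod_eq_single a (fun i _ hi => by simp [hi]) (by simp)]
          simp
        · rw [if_neg hab]
          rw [← Finset.mul_prod_erase Finset.univ _ (Finset.mem_univ a),
            ← Finset.mul_prod_erase (Finset.univ.erase a) _
              (Finset.mem_erase.mpr ⟨fun h => hab h.symm, Finset.mem_univ b⟩)]
          rw [Finset.prod_eq_one (fun i hi => by
            have h1 : i ≠ b := (Finset.mem_erase.mp hi).1
            have h2 : i ≠ a := (Finset.mem_erase.mp (Finset.mem_erase.mp hi).2).1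
            simp [h1, h2])]
          simp [hab, Ne.symm hab]

end PiLemmas

noncomputable instance (m n : ℕ) : MeasurableSpace (Matrix (Fin m) (Fin n) ℝ) :=
  MeasurableSpace.pi

/-- The Gaussian product measure on `m × n` real matrices: every entry is an
independent real Gaussian with mean 0 and variance `α`. -/
noncomputable def gaussianMatrix (m n : ℕ) (α : ℝ≥0) :
    Measure (Matrix (Fin m) (Fin n) ℝ) :=
  Measure.pi fun _ : Fin m => Measure.pi fun _ : Fin n => gaussianReal 0 α

section MatrixMoments

variable {m n : ℕ} {α : ℝ≥0}

lemma row_int_id (hα : α ≠ 0) (l : Fin n) :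
    Integrable (fun r : Fin n → ℝ => r l) (Measure.pi fun _ => gaussianReal 0 α) := by
  have := integrable_two_coord (ι := Fin n) (μ := gaussianReal 0 α)
    (u := fun t : ℝ => t) (v := fun _ : ℝ => (1:ℝ))
    (integrable_id_gaussianReal hα) (integrable_const 1)
    (by simpa using integrable_id_gaussianReal hα) l l
  simpa using this

lemma row_int_mul (hα : α ≠ 0) (l l' : Fin n) :
    Integrable (fun r : Fin n → ℝ => r l * r l')
      (Measure.pi fun _ => gaussianReal 0 α) :=
  integrable_two_coord (ι := Fin n) (μ := gaussianReal 0 α)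
    (u := fun t : ℝ => t) (v := fun t : ℝ => t)
    (integrable_id_gaussianReal hα) (integrable_id_gaussianReal hα)
    (integrable_sq_gaussianReal hα) l l'

lemma row_integral_id (hα : α ≠ 0) (l : Fin n) :
    ∫ r : Fin n → ℝ, r l ∂(Measure.pi fun _ => gaussianReal 0 α) = 0 := by
  have := integral_two_coord (ι := Fin n) (μ := gaussianReal 0 α)
    (u := fun t : ℝ => t) (v := fun _ : ℝ => (1:ℝ))
    (integrable_id_gaussianReal hα) (integrable_const 1)
    (by simpa using integrable_id_gaussianReal hα) l l
  simpa [integral_id_gaussianReal' hα] using this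

lemma row_integral_mul (hα : α ≠ 0) (l l' : Fin n) :
    ∫ r : Fin n → ℝ, r l * r l' ∂(Measure.pi fun _ => gaussianReal 0 α)
      = if l = l' then (α : ℝ) else 0 := by
  have := integral_two_coord (ι := Fin n) (μ := gaussianReal 0 α)
    (u := fun t : ℝ => t) (v := fun t : ℝ => t)
    (integrable_id_gaussianReal hα) (integrable_id_gaussianReal hα)
    (integrable_sq_gaussianReal hα) l l'
  rw [this, integral_sq_gaussianReal hα, integral_id_gaussianReal' hα]
  by_cases h : l = l' <;> simp [h]

lemma gaussianMatrix_integrable_mul (hα : α ≠ 0) (k k' : Fin m) (l l' : Fin n) :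
    Integrable (fun G : Matrix (Fin m) (Fin n) ℝ => G k l * G k' l')
      (gaussianMatrix m n α) :=
  integrable_two_coord (ι := Fin m) (μ := Measure.pi fun _ => gaussianReal 0 α)
    (u := fun r : Fin n → ℝ => r l) (v := fun r : Fin n → ℝ => r l')
    (row_int_id hα l) (row_int_id hα l') (row_int_mul hα l l') k k'

lemma gaussianMatrix_integral_mul (hα : α ≠ 0) (k k' : Fin m) (l l' : Fin n) :
    ∫ G : Matrix (Fin m) (Fin n) ℝ, G k l * G k' l' ∂(gaussianMatrix m n α)
      = if (k, l) = (k', l') then (α : ℝ) else 0 := by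
  have h := integral_two_coord (ι := Fin m) (μ := Measure.pi fun _ => gaussianReal 0 α)
    (u := fun r : Fin n → ℝ => r l) (v := fun r : Fin n → ℝ => r l')
    (row_int_id hα l) (row_int_id hα l') (row_int_mul hα l l') k k'
  rw [row_integral_mul hα l l', row_integral_id hα l, row_integral_id hα l'] at h
  rw [show (∫ G : Matrix (Fin m) (Fin n) ℝ, G k l * G k' l' ∂(gaussianMatrix m n α))
      = if k = k' then (if l = l' then (α:ℝ) else 0) else 0 * 0 from h]
  by_cases h1 : k = k' <;> by_cases h2 : l = l' <;> simp [h1, h2, Prod.ext_iff]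

end MatrixMoments


/-- For fixed matrices `S`, `T` and a Gaussian random matrix `G` with i.i.d.
entries of mean 0 and variance `α`, `E‖S·G·T‖_F² = α·‖S‖_F²·‖T‖_F²`. -/
theorem expectation_sq_frobenius_gaussian
    (n1 n2 n3 n4 : ℕ) (hn1 : 0 < n1) (hn2 : 0 < n2) (hn3 : 0 < n3) (hn4 : 0 < n4)
    (α : ℝ≥0) (hα : 0 < α)
    (S : Matrix (Fin n1) (Fin n2) ℝ) (T : Matrix (Fin n3) (Fin n4) ℝ) :
    ∫ G : Matrix (Fin n2) (Fin n3) ℝ,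
        (∑ i, ∑ j, ((S * G * T) i j) ^ 2) ∂(gaussianMatrix n2 n3 α)
      = (α : ℝ) * (∑ i, ∑ j, (S i j) ^ 2) * (∑ i, ∑ j, (T i j) ^ 2) := by
  have hα' : α ≠ 0 := hα.ne'
  have entry : ∀ (G : Matrix (Fin n2) (Fin n3) ℝ) i j,
      (S * G * T) i j = ∑ p : Fin n2 × Fin n3, S i p.1 * G p.1 p.2 * T p.2 j := by
    intro G i j
    simp only [Matrix.mul_apply, Finset.sum_mul, Fintype.sum_prod_type]
    rw [Finset.sum_comm]
  have hFint : ∀ (i : Fin n1) (j : Fin n4) (p q : Fin n2 × Fin n3),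
      Integrable (fun G : Matrix (Fin n2) (Fin n3) ℝ =>
        (S i p.1 * T p.2 j * (S i q.1 * T q.2 j)) * (G p.1 p.2 * G q.1 q.2))
        (gaussianMatrix n2 n3 α) :=
    fun i j p q => (gaussianMatrix_integrable_mul hα' p.1 q.1 p.2 q.2).const_mul _
  have hrep : ∀ G : Matrix (Fin n2) (Fin n3) ℝ,
      (∑ i, ∑ j, ((S * G * T) i j) ^ 2)
        = ∑ i, ∑ j, ∑ p : Fin n2 × Fin n3, ∑ q : Fin n2 × Fin n3,
            (S i p.1 * T p.2 j * (S i q.1 * T q.2 j)) * (G p.1 p.2 * G q.1 q.2) := by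
    intro G
    refine Finset.sum_congr rfl fun i _ => Finset.sum_congr rfl fun j _ => ?_
    rw [entry G i j, sq, Finset.sum_mul_sum]
    exact Finset.sum_congr rfl fun p _ => Finset.sum_congr rfl fun q _ => by ring
  calc ∫ G : Matrix (Fin n2) (Fin n3) ℝ,
        (∑ i, ∑ j, ((S * G * T) i j) ^ 2) ∂(gaussianMatrix n2 n3 α)
      = ∫ G : Matrix (Fin n2) (Fin n3) ℝ,
          (∑ i, ∑ j, ∑ p : Fin n2 × Fin n3, ∑ q : Fin n2 × Fin n3,
            (S i p.1 * T p.2 j * (S i q.1 * T q.2 j)) * (G p.1 p.2 * G q.1 q.2))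
          ∂(gaussianMatrix n2 n3 α) := by
        exact integral_congr_ae (Filter.Eventually.of_forall hrep)
    _ = ∑ i, ∑ j, ∑ p : Fin n2 × Fin n3, ∑ q : Fin n2 × Fin n3,
          ∫ G : Matrix (Fin n2) (Fin n3) ℝ,
            (S i p.1 * T p.2 j * (S i q.1 * T q.2 j)) * (G p.1 p.2 * G q.1 q.2)
            ∂(gaussianMatrix n2 n3 α) := by
        rw [integral_finset_sum _ fun i _ => integrable_finset_sum _ fun j _ =>
          integrable_finset_sum _ fun p _ => integrable_finset_sum _ fun q _ => hFint i j p q]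
        refine Finset.sum_congr rfl fun i _ => ?_
        rw [integral_finset_sum _ fun j _ => integrable_finset_sum _ fun p _ =>
          integrable_finset_sum _ fun q _ => hFint i j p q]
        refine Finset.sum_congr rfl fun j _ => ?_
        rw [integral_finset_sum _ fun p _ => integrable_finset_sum _ fun q _ => hFint i j p q]
        refine Finset.sum_congr rfl fun p _ => ?_
        rw [integral_finset_sum _ fun q _ => hFint i j p q]
    _ = ∑ i, ∑ j, ∑ p : Fin n2 × Fin n3, ∑ q : Fin n2 × Fin n3,
          (S i p.1 * T p.2 j * (S i q.1 * T q.2 j))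
            * (if (p.1, p.2) = (q.1, q.2) then (α : ℝ) else 0) := by
        refine Finset.sum_congr rfl fun i _ => Finset.sum_congr rfl fun j _ =>
          Finset.sum_congr rfl fun p _ => Finset.sum_congr rfl fun q _ => ?_
        rw [integral_const_mul, gaussianMatrix_integral_mul hα' p.1 q.1 p.2 q.2]
    _ = (α : ℝ) * (∑ i, ∑ j, (S i j) ^ 2) * (∑ i, ∑ j, (T i j) ^ 2) := by
        simp only [Prod.mk.eta, mul_ite, mul_zero, Finset.sum_ite_eq, Finset.mem_univ, if_true]
        have key : ∀ (i : Fin n1) (j : Fin n4),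
            (∑ p : Fin n2 × Fin n3, S i p.1 * T p.2 j * (S i p.1 * T p.2 j) * (α:ℝ))
              = (∑ k, S i k ^ 2) * (∑ l, T l j ^ 2) * (α:ℝ) := by
          intro i j
          rw [Fintype.sum_prod_type, Finset.sum_mul_sum, Finset.sum_mul]
          refine Finset.sum_congr rfl fun k _ => ?_
          rw [Finset.sum_mul]
          exact Finset.sum_congr rfl fun l _ => by ring
        rw [show (α : ℝ) * (∑ i, ∑ j, (S i j) ^ 2) * (∑ i, ∑ j, (T i j) ^ 2)
            = ∑ i : Fin n1, ∑ j : Fin n4, (∑ k, S i k ^ 2) * (∑ l, T l j ^ 2) * (α:ℝ) from ?_]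
        · exact Finset.sum_congr rfl fun i _ => Finset.sum_congr rfl fun j _ => key i j
        · have hT : (∑ i, ∑ j, (T i j) ^ 2) = ∑ j, ∑ i, (T i j) ^ 2 := Finset.sum_comm
          rw [hT, mul_assoc, Finset.sum_mul_sum, Finset.mul_sum]
          refine Finset.sum_congr rfl fun i _ => ?_
          rw [Finset.mul_sum]
          exact Finset.sum_congr rfl fun j _ => by ring
end

section
/- Let n' ≥ 1 be a natural number, n = 8·n', and let x, y : Fin n → ℝ. Set S = Σ_{j=0}^{n−1} |x_j·y_j|, and for i = 1,…,n' let t_i = Σ_{j=8(i−1)}^{8i−1} x_j·y_j and s_i = Σ_{j=8(i−1)}^{8i−1} |x_j·y_j| be the exact block sums. Let û > 0 and u' = û/2. Suppose t̃_i ∈ ℝ satisfy |t̃_i − t_i| ≤ 14·u'·s_i for each i (the error of 7 round-toward-zero additions in the Tensor Core accumulator), δ_i ∈ ℝ satisfy |δ_i| ≤ û, Δ ∈ ℝ satisfies |Δ| ≤ (n'−1)·û·Σ_{i=1}^{n'} |t̃_i·(1+δ_i)|, and c̃ = Σ_{i=1}^{n'} t̃_i·(1+δ_i) + Δ. Then the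 total error is bounded by |c̃ − Σ_{i=1}^{n'} t_i| ≤ (n' + 7)·û·(1 + û)·(1 + 7·û)·S. -/
/-- The global index of the `j`-th element of the `i`-th block of 8. -/
def blockIdx (n' : ℕ) (i : Fin n') (j : Fin 8) : Fin (8 * n') :=
  ⟨8 * i.val + j.val, by have hi := i.isLt; have hj := j.isLt; omega⟩

lemma sum_blocks {n' : ℕ} (f : Fin (8 * n') → ℝ) :
    ∑ j : Fin (8 * n'), f j = ∑ i : Fin n', ∑ j : Fin 8, f (blockIdx n' i j) := by
  have hbij : Function.Bijective (fun p : Fin n' × Fin 8 => blockIdx n' p.1 p.2) := by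
    rw [Fintype.bijective_iff_injective_and_card]
    constructor
    · intro a b hab
      have h : 8 * a.1.val + a.2.val = 8 * b.1.val + b.2.val := congrArg Fin.val hab
      have ha2 := a.2.isLt; have hb2 := b.2.isLt
      exact Prod.ext (Fin.ext (by omega)) (Fin.ext (by omega))
    · simp [Fintype.card_prod, Nat.mul_comm]
  have h := Fintype.sum_bijective (fun p : Fin n' × Fin 8 => blockIdx n' p.1 p.2) hbij
    (fun p => f (blockIdx n' p.1 p.2)) f (fun p => rfl)
  rw [← h, Fintype.sum_prod_type]

/-- Rounding-error bound for an inner product of length `n = 8·n'` computed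
blockwise on Tensor Cores: each exact block sum `t i` of 8 products is
computed as `ttil i` with error at most `14·(uh/2)·s i` (7 round-toward-zero
additions with unit roundoff `uh/2`), each block result incurs a relative
rounding `δ i` with `|δ i| ≤ uh`, and the block results are accumulated with
total error `Δ` bounded by `(n'−1)·uh·Σ |ttil i·(1+δ i)|`.  Then the final
result `ctil` satisfies
`|ctil − Σ t i| ≤ (n' + 7)·uh·(1+uh)·(1+7uh)·Σ |x j·y j|`. -/
theorem tensorcore_inner_product_error_bound
    (n' : ℕ) (hn' : 1 ≤ n') (x y : Fin (8 * n') → ℝ)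
    (uh : ℝ) (huh : 0 < uh)
    (t ttil s δ : Fin n' → ℝ) (Δ ctil : ℝ)
    (ht : ∀ i : Fin n', t i = ∑ j : Fin 8, x (blockIdx n' i j) * y (blockIdx n' i j))
    (hs : ∀ i : Fin n', s i = ∑ j : Fin 8, |x (blockIdx n' i j) * y (blockIdx n' i j)|)
    (httil : ∀ i : Fin n', |ttil i - t i| ≤ 14 * (uh / 2) * s i)
    (hδ : ∀ i : Fin n', |δ i| ≤ uh)
    (hΔ : |Δ| ≤ ((n' : ℝ) - 1) * uh * ∑ i : Fin n', |ttil i * (1 + δ i)|)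
    (hc : ctil = (∑ i : Fin n', ttil i * (1 + δ i)) + Δ) :
    |ctil - ∑ i : Fin n', t i|
      ≤ ((n' : ℝ) + 7) * uh * (1 + uh) * (1 + 7 * uh) * ∑ j : Fin (8 * n'), |x j * y j| := by
  set S : ℝ := ∑ j : Fin (8 * n'), |x j * y j| with hSdef
  have hSsum : S = ∑ i : Fin n', s i := by
    rw [hSdef, sum_blocks (fun j => |x j * y j|)]
    exact Finset.sum_congr rfl fun i _ => (hs i).symm
  have hsnn : ∀ i, 0 ≤ s i := fun i => by
    rw [hs]; exact Finset.sum_nonneg fun j _ => abs_nonneg _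
  have hSnn : 0 ≤ S := by rw [hSsum]; exact Finset.sum_nonneg fun i _ => hsnn i
  have hts : ∀ i, |t i| ≤ s i := fun i => by
    rw [ht, hs]; exact Finset.abs_sum_le_sum_abs _ _
  have httils : ∀ i, |ttil i| ≤ (1 + 7 * uh) * s i := by
    intro i
    have h1 : |ttil i| ≤ |ttil i - t i| + |t i| := by
      calc |ttil i| = |(ttil i - t i) + t i| := by ring_nf
        _ ≤ |ttil i - t i| + |t i| := abs_add_le _ _
    have := httil i; have := hts i; linarith
  have hterm : ∀ i, |ttil i * (1 + δ i) - t i| ≤ uh * (8 + 7 * uh) * s i := by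
    intro i
    have heq : ttil i * (1 + δ i) - t i = (ttil i - t i) + ttil i * δ i := by ring
    have h1 : |ttil i * (1 + δ i) - t i| ≤ |ttil i - t i| + |ttil i| * |δ i| := by
      rw [heq]; refine (abs_add_le _ _).trans ?_; rw [abs_mul]
    have h2 := httil i
    have h3 := httils i
    have h4 := hδ i
    have h5 : |ttil i| * |δ i| ≤ ((1 + 7 * uh) * s i) * uh :=
      mul_le_mul h3 h4 (abs_nonneg _) (by nlinarith [hsnn i])
    nlinarith [hsnn i]
  have habs : ∀ i, |ttil i * (1 + δ i)| ≤ (1 + uh) * (1 + 7 * uh) * s i := by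
    intro i
    rw [abs_mul]
    have h1 : |1 + δ i| ≤ 1 + uh := by
      have := hδ i
      calc |1 + δ i| ≤ |(1:ℝ)| + |δ i| := abs_add_le _ _
        _ ≤ 1 + uh := by rw [abs_one]; linarith
    calc |ttil i| * |1 + δ i| ≤ ((1 + 7 * uh) * s i) * (1 + uh) :=
          mul_le_mul (httils i) h1 (abs_nonneg _) (by nlinarith [hsnn i])
      _ = (1 + uh) * (1 + 7 * uh) * s i := by ring
  have hn1 : (1 : ℝ) ≤ (n' : ℝ) := by exact_mod_cast hn'
  have hΔ' : |Δ| ≤ ((n' : ℝ) - 1) * uh * ((1 + uh) * (1 + 7 * uh) * S) := by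
    refine hΔ.trans ?_
    have hsum : ∑ i : Fin n', |ttil i * (1 + δ i)| ≤ (1 + uh) * (1 + 7 * uh) * S := by
      rw [hSsum, Finset.mul_sum]
      exact Finset.sum_le_sum fun i _ => habs i
    have hc0 : 0 ≤ ((n' : ℝ) - 1) * uh := mul_nonneg (by linarith) huh.le
    exact mul_le_mul_of_nonneg_left hsum hc0
  have hmain : |ctil - ∑ i : Fin n', t i|
      ≤ uh * (8 + 7 * uh) * S + |Δ| := by
    have heq : ctil - ∑ i : Fin n', t i
        = (∑ i : Fin n', (ttil i * (1 + δ i) - t i)) + Δ := by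
      rw [hc, Finset.sum_sub_distrib]; ring
    calc |ctil - ∑ i : Fin n', t i|
        ≤ |∑ i : Fin n', (ttil i * (1 + δ i) - t i)| + |Δ| := by
          rw [heq]; exact abs_add_le _ _
      _ ≤ (∑ i : Fin n', |ttil i * (1 + δ i) - t i|) + |Δ| := by
          gcongr; exact Finset.abs_sum_le_sum_abs _ _
      _ ≤ (∑ i : Fin n', uh * (8 + 7 * uh) * s i) + |Δ| := by
          gcongr with i; exact hterm i
      _ = uh * (8 + 7 * uh) * S + |Δ| := by rw [hSsum, Finset.mul_sum]
  have final : uh * (8 + 7 * uh) * S + ((n' : ℝ) - 1) * uh * ((1 + uh) * (1 + 7 * uh) * S)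
      ≤ ((n' : ℝ) + 7) * uh * (1 + uh) * (1 + 7 * uh) * S := by
    nlinarith [mul_nonneg (mul_nonneg huh.le huh.le) hSnn,
      mul_nonneg (mul_nonneg (mul_nonneg huh.le huh.le) huh.le) hSnn]
  linarith [hmain, hΔ']
end

section
/- Let n be a positive natural number, let U, V be orthogonal real n×n matrices (UᵀU = UUᵀ = I, VᵀV = VVᵀ = I), let σ : Fin n → ℝ, and let Σ = diag(σ₁, …, σ_n), so A = U·Σ·Vᵀ. For 0 ≤ p ≤ n, let Σ₁ = diag(σ₁, …, σ_p, 0, …, 0) (keeping the first p diagonal entries and zeroing the rest) and let Â = U·Σ₁·Vᵀ. Then the Frobenius norm of the approximation error satisfies ‖A − Â‖_F = sqrt(Σ_{i=p+1}^{n} σᵢ²), i.e., ‖A − Â‖_F = ‖Σ₂‖_F where Σ₂ = diag(σ_{p+1}, …, σ_n). -/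
open Matrix

/-- Eckart–Young equality for SVD truncation: if `A = U·diag(σ)·Vᵀ` with `U`,
`V` orthogonal, and `Â = U·Σ₁·Vᵀ` keeps only the first `p` diagonal entries,
then `‖A − Â‖_F = sqrt(Σ_{i ≥ p} σ i ^ 2)`, the Frobenius norm of the
discarded part of the spectrum. -/
theorem eckart_young_equality (n : ℕ) (hn : 0 < n)
    (U V : Matrix (Fin n) (Fin n) ℝ)
    (hU1 : Uᵀ * U = 1) (hU2 : U * Uᵀ = 1)
    (hV1 : Vᵀ * V = 1) (hV2 : V * Vᵀ = 1)
    (σ : Fin n → ℝ) (p : ℕ) (hp : p ≤ n)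
    (A Ahat : Matrix (Fin n) (Fin n) ℝ)
    (hA : A = U * Matrix.diagonal σ * Vᵀ)
    (hAhat : Ahat = U * Matrix.diagonal (fun i : Fin n => if (i : ℕ) < p then σ i else 0) * Vᵀ) :
    Real.sqrt (∑ i, ∑ j, ((A - Ahat) i j) ^ 2)
      = Real.sqrt (∑ i ∈ Finset.univ.filter (fun i : Fin n => p ≤ (i : ℕ)), σ i ^ 2) := by
  set τ : Fin n → ℝ := fun i => if (i : ℕ) < p then 0 else σ i with hτ
  have hdiff : A - Ahat = U * Matrix.diagonal τ * Vᵀ := by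
    have hd : Matrix.diagonal σ - Matrix.diagonal (fun i : Fin n => if (i : ℕ) < p then σ i else 0)
        = Matrix.diagonal τ := by
      rw [Matrix.diagonal_sub]
      ext i j
      by_cases h : (i : ℕ) < p <;> simp [Matrix.diagonal_apply, hτ, h]
    rw [hA, hAhat, ← sub_mul, ← Matrix.mul_sub, hd]
  have key : ∑ i, ∑ j, ((A - Ahat) i j) ^ 2 = ∑ i, τ i ^ 2 := by
    have h1 : ∑ i, ∑ j, ((A - Ahat) i j) ^ 2 = ((A - Ahat)ᵀ * (A - Ahat)).trace := by
      simp [Matrix.trace, Matrix.mul_apply, Matrix.diag, Matrix.transpose_apply, sq]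
      rw [Finset.sum_comm]
    rw [h1, hdiff]
    have : (U * Matrix.diagonal τ * Vᵀ)ᵀ * (U * Matrix.diagonal τ * Vᵀ)
        = V * ((Matrix.diagonal τ)ᵀ * Matrix.diagonal τ) * Vᵀ := by
      simp only [Matrix.transpose_mul, Matrix.transpose_transpose]
      calc V * ((Matrix.diagonal τ)ᵀ * Uᵀ) * (U * Matrix.diagonal τ * Vᵀ)
          = V * (Matrix.diagonal τ)ᵀ * (Uᵀ * U) * (Matrix.diagonal τ * Vᵀ) := by
            noncomm_ring
        _ = V * ((Matrix.diagonal τ)ᵀ * Matrix.diagonal τ) * Vᵀ := by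
            rw [hU1]; noncomm_ring
    rw [this, Matrix.trace_mul_comm, ← Matrix.mul_assoc, hV1, Matrix.one_mul,
      Matrix.diagonal_transpose, Matrix.diagonal_mul_diagonal, Matrix.trace_diagonal]
    exact Finset.sum_congr rfl fun i _ => (sq (τ i)).symm
  rw [key]
  congr 1
  rw [Finset.sum_filter]
  refine Finset.sum_congr rfl fun i _ => ?_
  by_cases h : (i : ℕ) < p
  · simp [hτ, h, Nat.not_le.mpr h]
  · simp [hτ, h, Nat.not_lt.mp h]
end
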